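/- arXiv:1202.1029 — 3 statements merged into one kernel-verified Lean document; each statement's English description precedes it below -/
import Mathlib

section
/- For all integers p, q with min{p+q, p−q} ≥ 0, one has 4^{p+1}/(√2·π) = ∑_{k=0}^∞ [(1/2)_{k+2p} (1/2)_{k+2q} (1/2)_{k−2q}] / [k! · (k+p+q)! · (k+p−q)!] · (6k+4p+1)/(−8)^k. -/
/-- The shifted factorial `(x)ₙ = Γ(x + n) / Γ(x)` for a real `x` and an
integer `n` (possibly negative). For a nonnegative integer `n` this equals
`x (x+1) ⋯ (x+n-1)`. -/
noncomputable def shiftedFactorial (x : ℝ) (n : ℤ) : ℝ :=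
  Real.Gamma (x + n) / Real.Gamma x

namespace WG
open Real Filter Topology Finset

lemma half_add_int_ne (n : ℤ) (m : ℕ) : (1/2 : ℝ) + n ≠ -m := by
  intro h
  have h2 : ((2*n + 2*m : ℤ) : ℝ) = ((-1 : ℤ) : ℝ) := by push_cast; linarith
  have := Int.cast_injective (α := ℝ) h2
  omega

lemma gamma_half_ne (n : ℤ) : Real.Gamma ((1/2:ℝ) + n) ≠ 0 :=
  Real.Gamma_ne_zero (fun m => half_add_int_ne n m)

lemma half_add_ne_zero (n : ℤ) : (1/2:ℝ) + n ≠ 0 := by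
  have := half_add_int_ne n 0; simpa using this

noncomputable def sF (n : ℤ) : ℝ := shiftedFactorial (1/2) n

lemma sF_ne (n : ℤ) : sF n ≠ 0 := by
  unfold sF shiftedFactorial
  exact div_ne_zero (gamma_half_ne n) (by simpa using gamma_half_ne 0)

lemma sF_succ (n : ℤ) : sF (n+1) = sF n * (1/2 + n) := by
  unfold sF shiftedFactorial
  have h : (1/2:ℝ) + (n+1 : ℤ) = ((1/2:ℝ) + n) + 1 := by push_cast; ring
  rw [h, Real.Gamma_add_one (half_add_ne_zero n)]
  ring

lemma sF_zero : sF 0 = 1 := by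
  unfold sF shiftedFactorial
  simp [div_self (by simpa using gamma_half_ne 0)]

lemma sF_mul_neg : ∀ j : ℕ, sF (2*j) * sF (-(2*j)) = 1 := by
  intro j
  induction j with
  | zero => simp [sF_zero]
  | succ j ih =>
    set z : ℤ := (j:ℤ) with hz
    rw [show (2*((j+1:ℕ):ℤ)) = (2*z+1)+1 by push_cast; ring,
        show (-(2*z+1+1) : ℤ) = -(2*z)-2 by ring]
    have h1 := sF_succ (2*z)
    have h2 := sF_succ (2*z+1)
    have h3 := sF_succ (-(2*z)-2)
    have h4 := sF_succ (-(2*z)-1)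
    rw [show (-(2*z)-2+1 : ℤ) = -(2*z)-1 by ring] at h3
    rw [show (-(2*z)-1+1 : ℤ) = -(2*z) by ring] at h4
    push_cast at h1 h2 h3 h4
    rw [h4, h3] at ih
    rw [h2, h1]
    linear_combination ih

lemma sF_nat : ∀ n : ℕ, sF n = ((2*n).factorial : ℝ) / (4^n * (n.factorial : ℝ)) := by
  intro n
  induction n with
  | zero => simpa using sF_zero
  | succ n ih =>
    rw [show ((n+1:ℕ):ℤ) = (n:ℤ)+1 by push_cast; ring, sF_succ, ih]
    rw [show 2*(n+1) = (2*n+1)+1 by ring]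
    rw [Nat.factorial_succ, Nat.factorial_succ, Nat.factorial_succ]
    have h1 : (0:ℝ) < (n.factorial : ℝ) := by exact_mod_cast n.factorial_pos
    have h2 : (0:ℝ) < ((2*n).factorial : ℝ) := by exact_mod_cast (2*n).factorial_pos
    have h4 : (0:ℝ) < (4:ℝ)^n := by positivity
    push_cast
    field_simp
    ring

noncomputable def c (p q : ℤ) (k : ℕ) : ℝ :=
  sF (k + 2*p) * sF (k + 2*q) * sF (k - 2*q) /
    ((k.factorial : ℝ) * ((((k:ℤ) + p + q).toNat.factorial : ℕ) : ℝ) *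
      ((((k:ℤ) + p - q).toNat.factorial : ℕ) : ℝ) * (-8:ℝ)^k)

noncomputable def term (p q : ℤ) (k : ℕ) : ℝ := (6*(k:ℝ) + 4*(p:ℝ) + 1) * c p q k

lemma fact_pos (n : ℕ) : (0:ℝ) < (n.factorial : ℝ) := by exact_mod_cast n.factorial_pos

lemma neg8_pow_ne (k : ℕ) : ((-8:ℝ))^k ≠ 0 := pow_ne_zero _ (by norm_num)

lemma c_ne (p q : ℤ) (k : ℕ) : c p q k ≠ 0 := by
  unfold c
  apply div_ne_zero
  · exact mul_ne_zero (mul_ne_zero (sF_ne _) (sF_ne _)) (sF_ne _)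
  · exact mul_ne_zero (mul_ne_zero (mul_ne_zero (fact_pos _).ne' (fact_pos _).ne') (fact_pos _).ne') (neg8_pow_ne k)

lemma toNat_cast_real {x : ℤ} (hx : 0 ≤ x) : ((x.toNat : ℕ) : ℝ) = (x : ℝ) := by
  exact_mod_cast congrArg (Int.cast : ℤ → ℝ) (Int.toNat_of_nonneg hx)

lemma c_succ (p q : ℤ) (k : ℕ) (h1 : 0 ≤ p + q) (h2 : 0 ≤ p - q) :
    c p q (k+1) = c p q k *
      (((k:ℝ)+2*p+1/2) * ((k:ℝ)+2*q+1/2) * ((k:ℝ)-2*q+1/2)) /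
      ((-8) * ((k:ℝ)+1) * ((k:ℝ)+(p:ℝ)+(q:ℝ)+1) * ((k:ℝ)+(p:ℝ)-(q:ℝ)+1)) := by
  unfold c
  rw [show ((k+1:ℕ):ℤ) + 2*p = ((k:ℤ)+2*p)+1 by push_cast; ring, sF_succ]
  rw [show ((k+1:ℕ):ℤ) + 2*q = ((k:ℤ)+2*q)+1 by push_cast; ring, sF_succ]
  rw [show ((k+1:ℕ):ℤ) - 2*q = ((k:ℤ)-2*q)+1 by push_cast; ring, sF_succ]
  rw [show (((k+1:ℕ):ℤ) + p + q).toNat = ((k:ℤ)+p+q).toNat + 1 by omega]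
  rw [show (((k+1:ℕ):ℤ) + p - q).toNat = ((k:ℤ)+p-q).toNat + 1 by omega]
  rw [Nat.factorial_succ, Nat.factorial_succ, Nat.factorial_succ, pow_succ]
  have ht1 : ((((k:ℤ)+p+q).toNat : ℕ) : ℝ) = (k:ℝ)+(p:ℝ)+(q:ℝ) := by
    rw [toNat_cast_real (by omega)]; push_cast; ring
  have ht2 : ((((k:ℤ)+p-q).toNat : ℕ) : ℝ) = (k:ℝ)+(p:ℝ)-(q:ℝ) := by
    rw [toNat_cast_real (by omega)]; push_cast; ring
  have hb1 : (0:ℝ) < (k:ℝ)+(p:ℝ)+(q:ℝ)+1 := by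
    have : (0:ℝ) ≤ (p:ℝ)+(q:ℝ) := by exact_mod_cast h1
    have hk : (0:ℝ) ≤ (k:ℝ) := Nat.cast_nonneg k
    linarith
  have hb2 : (0:ℝ) < (k:ℝ)+(p:ℝ)-(q:ℝ)+1 := by
    have : (0:ℝ) ≤ (p:ℝ)-(q:ℝ) := by exact_mod_cast h2
    have hk : (0:ℝ) ≤ (k:ℝ) := Nat.cast_nonneg k
    linarith
  have hf1 := fact_pos k
  have hf2 := fact_pos ((k:ℤ)+p+q).toNat
  have hf3 := fact_pos ((k:ℤ)+p-q).toNat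
  have h8 := neg8_pow_ne k
  push_cast [ht1, ht2]
  field_simp
  ring

lemma c_psucc (p q : ℤ) (k : ℕ) (h1 : 0 ≤ p + q) (h2 : 0 ≤ p - q) :
    c (p+1) q k = c p q k *
      (((k:ℝ)+2*p+1/2) * ((k:ℝ)+2*p+3/2)) /
      (((k:ℝ)+(p:ℝ)+(q:ℝ)+1) * ((k:ℝ)+(p:ℝ)-(q:ℝ)+1)) := by
  unfold c
  rw [show (k:ℤ) + 2*(p+1) = (((k:ℤ)+2*p)+1)+1 by ring, sF_succ, sF_succ]
  rw [show ((k:ℤ) + (p+1) + q).toNat = ((k:ℤ)+p+q).toNat + 1 by omega]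
  rw [show ((k:ℤ) + (p+1) - q).toNat = ((k:ℤ)+p-q).toNat + 1 by omega]
  rw [Nat.factorial_succ, Nat.factorial_succ]
  have ht1 : ((((k:ℤ)+p+q).toNat : ℕ) : ℝ) = (k:ℝ)+(p:ℝ)+(q:ℝ) := by
    rw [toNat_cast_real (by omega)]; push_cast; ring
  have ht2 : ((((k:ℤ)+p-q).toNat : ℕ) : ℝ) = (k:ℝ)+(p:ℝ)-(q:ℝ) := by
    rw [toNat_cast_real (by omega)]; push_cast; ring
  have hb1 : (0:ℝ) < (k:ℝ)+(p:ℝ)+(q:ℝ)+1 := by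
    have : (0:ℝ) ≤ (p:ℝ)+(q:ℝ) := by exact_mod_cast h1
    have hk : (0:ℝ) ≤ (k:ℝ) := Nat.cast_nonneg k
    linarith
  have hb2 : (0:ℝ) < (k:ℝ)+(p:ℝ)-(q:ℝ)+1 := by
    have : (0:ℝ) ≤ (p:ℝ)-(q:ℝ) := by exact_mod_cast h2
    have hk : (0:ℝ) ≤ (k:ℝ) := Nat.cast_nonneg k
    linarith
  have hf1 := fact_pos k
  have hf2 := fact_pos ((k:ℤ)+p+q).toNat
  have hf3 := fact_pos ((k:ℤ)+p-q).toNat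
  have h8 := neg8_pow_ne k
  push_cast [ht1, ht2]
  field_simp
  ring

lemma wz (p q : ℤ) (k : ℕ) (h1 : 0 ≤ p + q) (h2 : 0 ≤ p - q) :
    term (p+1) q k - 4 * term p q k =
      16*((k:ℝ)+1) * c p q (k+1) - 16*(k:ℝ) * c p q k := by
  unfold term
  rw [c_succ p q k h1 h2, c_psucc p q k h1 h2]
  have hb1 : (0:ℝ) < (k:ℝ)+(p:ℝ)+(q:ℝ)+1 := by
    have : (0:ℝ) ≤ (p:ℝ)+(q:ℝ) := by exact_mod_cast h1
    have hk : (0:ℝ) ≤ (k:ℝ) := Nat.cast_nonneg k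
    linarith
  have hb2 : (0:ℝ) < (k:ℝ)+(p:ℝ)-(q:ℝ)+1 := by
    have : (0:ℝ) ≤ (p:ℝ)-(q:ℝ) := by exact_mod_cast h2
    have hk : (0:ℝ) ≤ (k:ℝ) := Nat.cast_nonneg k
    linarith
  have hk1 : (0:ℝ) < (k:ℝ)+1 := by positivity
  push_cast
  field_simp
  ring

lemma term_succ (p q : ℤ) (k : ℕ) (h1 : 0 ≤ p + q) (h2 : 0 ≤ p - q) :
    term p q (k+1) = term p q k *
      ((6*(k:ℝ)+4*(p:ℝ)+7) * (((k:ℝ)+2*p+1/2) * ((k:ℝ)+2*q+1/2) * ((k:ℝ)-2*q+1/2))) /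
      ((6*(k:ℝ)+4*(p:ℝ)+1) * (8 * ((k:ℝ)+1) * ((k:ℝ)+(p:ℝ)+(q:ℝ)+1) * ((k:ℝ)+(p:ℝ)-(q:ℝ)+1))) *
      (-1) := by
  unfold term
  rw [c_succ p q k h1 h2]
  have hp : (0:ℝ) ≤ (p:ℝ) := by
    have : (0:ℤ) ≤ 2*p := by omega
    have : (0:ℤ) ≤ p := by omega
    exact_mod_cast this
  have h6 : (6*(k:ℝ)+4*(p:ℝ)+1) ≠ 0 := by
    have : (0:ℝ) ≤ (k:ℝ) := Nat.cast_nonneg k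
    nlinarith
  have hb1 : (0:ℝ) < (k:ℝ)+(p:ℝ)+(q:ℝ)+1 := by
    have : (0:ℝ) ≤ (p:ℝ)+(q:ℝ) := by exact_mod_cast h1
    have hk : (0:ℝ) ≤ (k:ℝ) := Nat.cast_nonneg k
    linarith
  have hb2 : (0:ℝ) < (k:ℝ)+(p:ℝ)-(q:ℝ)+1 := by
    have : (0:ℝ) ≤ (p:ℝ)-(q:ℝ) := by exact_mod_cast h2
    have hk : (0:ℝ) ≤ (k:ℝ) := Nat.cast_nonneg k
    linarith
  have hk1 : (0:ℝ) < (k:ℝ)+1 := by positivity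
  push_cast
  field_simp
  ring

set_option maxHeartbeats 1000000 in
lemma abs_term_succ (p q : ℤ) (k : ℕ) (h0 : 0 ≤ q) (hqp : q ≤ p) :
    |term p q (k+1)| = |term p q k| *
      ((6*(k:ℝ)+4*(p:ℝ)+7) * (((k:ℝ)+2*p+1/2) * ((k:ℝ)+2*q+1/2) * |(k:ℝ)-2*q+1/2|)) /
      ((6*(k:ℝ)+4*(p:ℝ)+1) * (8 * ((k:ℝ)+1) * ((k:ℝ)+(p:ℝ)+(q:ℝ)+1) * ((k:ℝ)+(p:ℝ)-(q:ℝ)+1))) := by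
  have h1 : 0 ≤ p + q := by omega
  have h2 : 0 ≤ p - q := by omega
  have hk : (0:ℝ) ≤ (k:ℝ) := Nat.cast_nonneg k
  have hq' : (0:ℝ) ≤ (q:ℝ) := by exact_mod_cast h0
  have hp' : (q:ℝ) ≤ (p:ℝ) := by exact_mod_cast hqp
  have hb1 : (0:ℝ) < (k:ℝ)+(p:ℝ)+(q:ℝ)+1 := by linarith
  have hb2 : (0:ℝ) < (k:ℝ)+(p:ℝ)-(q:ℝ)+1 := by linarith
  have h67 : (0:ℝ) < 6*(k:ℝ)+4*(p:ℝ)+7 := by linarith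
  have h61 : (0:ℝ) < 6*(k:ℝ)+4*(p:ℝ)+1 := by linarith
  have hA : (0:ℝ) < (k:ℝ)+2*p+1/2 := by linarith
  have hB : (0:ℝ) < (k:ℝ)+2*q+1/2 := by linarith
  have hD : (0:ℝ) < (6*(k:ℝ)+4*(p:ℝ)+1) * (8 * ((k:ℝ)+1) * ((k:ℝ)+(p:ℝ)+(q:ℝ)+1) * ((k:ℝ)+(p:ℝ)-(q:ℝ)+1)) := by
    apply mul_pos h61
    apply mul_pos (mul_pos (mul_pos (by norm_num : (0:ℝ) < 8) (by linarith : (0:ℝ) < (k:ℝ)+1)) hb1) hb2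
  have eN : |(6*(k:ℝ)+4*(p:ℝ)+7) * (((k:ℝ)+2*(p:ℝ)+1/2) * ((k:ℝ)+2*(q:ℝ)+1/2) * ((k:ℝ)-2*(q:ℝ)+1/2))| =
      (6*(k:ℝ)+4*(p:ℝ)+7) * (((k:ℝ)+2*(p:ℝ)+1/2) * ((k:ℝ)+2*(q:ℝ)+1/2) * |(k:ℝ)-2*(q:ℝ)+1/2|) := by
    rw [abs_mul, abs_mul, abs_mul, abs_of_pos h67, abs_of_pos hA, abs_of_pos hB]
  rw [term_succ p q k h1 h2, abs_mul, abs_div, abs_mul, eN, abs_of_pos hD]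
  simp only [abs_neg, abs_one, mul_one]

set_option maxHeartbeats 2000000 in
lemma summable_term (p q : ℤ) (h0 : 0 ≤ q) (hqp : q ≤ p) : Summable (term p q) := by
  apply summable_of_ratio_norm_eventually_le (r := 1/2) (by norm_num)
  filter_upwards [eventually_ge_atTop (40*(p.toNat+1))] with k hk
  have hk40 : (40:ℝ)*((p:ℝ)+1) ≤ (k:ℝ) := by
    have : ((40*(p.toNat+1) : ℕ) : ℝ) ≤ (k:ℝ) := by exact_mod_cast hk
    have hpt : ((p.toNat : ℕ) : ℝ) = (p:ℝ) := by
      exact_mod_cast congrArg (Int.cast : ℤ → ℝ) (Int.toNat_of_nonneg (by omega))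
    push_cast at this
    rw [hpt] at this
    linarith
  have hq' : (0:ℝ) ≤ (q:ℝ) := by exact_mod_cast h0
  have hp' : (q:ℝ) ≤ (p:ℝ) := by exact_mod_cast hqp
  have hkn : (0:ℝ) ≤ (k:ℝ) := Nat.cast_nonneg k
  simp only [Real.norm_eq_abs]
  rw [abs_term_succ p q k h0 hqp]
  have hb1 : (0:ℝ) < (k:ℝ)+(p:ℝ)+(q:ℝ)+1 := by linarith
  have hb2 : (0:ℝ) < (k:ℝ)+(p:ℝ)-(q:ℝ)+1 := by linarith
  have h61 : (0:ℝ) < 6*(k:ℝ)+4*(p:ℝ)+1 := by linarith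
  have hDen : (0:ℝ) < (6*(k:ℝ)+4*(p:ℝ)+1) * (8 * ((k:ℝ)+1) * ((k:ℝ)+(p:ℝ)+(q:ℝ)+1) * ((k:ℝ)+(p:ℝ)-(q:ℝ)+1)) := by
    apply mul_pos h61
    apply mul_pos (mul_pos (mul_pos (by norm_num : (0:ℝ) < 8) (by linarith : (0:ℝ) < (k:ℝ)+1)) hb1) hb2
  rw [div_le_iff₀ hDen]
  have habs : |(k:ℝ)-2*q+1/2| = (k:ℝ)-2*q+1/2 := abs_of_pos (by linarith)
  rw [habs]
  -- factor-wise bounds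
  have f1 : 6*(k:ℝ)+4*(p:ℝ)+7 ≤ 2*(6*(k:ℝ)+4*(p:ℝ)+1) := by linarith
  have f2 : (k:ℝ)+2*p+1/2 ≤ (11/10)*((k:ℝ)+1) := by linarith
  have f3 : (k:ℝ)+2*q+1/2 ≤ (11/10)*((k:ℝ)+(p:ℝ)+(q:ℝ)+1) := by linarith
  have f4 : (k:ℝ)-2*q+1/2 ≤ (k:ℝ)+(p:ℝ)-(q:ℝ)+1 := by linarith
  have pos2 : (0:ℝ) ≤ (k:ℝ)+2*p+1/2 := by linarith
  have pos3 : (0:ℝ) ≤ (k:ℝ)+2*q+1/2 := by linarith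
  have pos4 : (0:ℝ) ≤ (k:ℝ)-2*q+1/2 := by linarith
  have m1 : ((k:ℝ)+2*p+1/2) * ((k:ℝ)+2*q+1/2) ≤ ((11/10)*((k:ℝ)+1)) * ((11/10)*((k:ℝ)+(p:ℝ)+(q:ℝ)+1)) :=
    mul_le_mul f2 f3 pos3 (by linarith)
  have m2 : ((k:ℝ)+2*p+1/2) * ((k:ℝ)+2*q+1/2) * ((k:ℝ)-2*q+1/2) ≤
      ((11/10)*((k:ℝ)+1)) * ((11/10)*((k:ℝ)+(p:ℝ)+(q:ℝ)+1)) * ((k:ℝ)+(p:ℝ)-(q:ℝ)+1) :=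
    mul_le_mul m1 f4 pos4 (by nlinarith)
  have m3 : (6*(k:ℝ)+4*(p:ℝ)+7) * (((k:ℝ)+2*p+1/2) * ((k:ℝ)+2*q+1/2) * ((k:ℝ)-2*q+1/2)) ≤
      (2*(6*(k:ℝ)+4*(p:ℝ)+1)) * (((11/10)*((k:ℝ)+1)) * ((11/10)*((k:ℝ)+(p:ℝ)+(q:ℝ)+1)) * ((k:ℝ)+(p:ℝ)-(q:ℝ)+1)) :=
    mul_le_mul f1 m2 (by nlinarith [mul_nonneg (mul_nonneg pos2 pos3) pos4]) (by linarith)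
  have habs0 : (0:ℝ) ≤ |term p q k| := abs_nonneg _
  calc |term p q k| * ((6*(k:ℝ)+4*(p:ℝ)+7) * (((k:ℝ)+2*p+1/2) * ((k:ℝ)+2*q+1/2) * ((k:ℝ)-2*q+1/2)))
      ≤ |term p q k| * ((2*(6*(k:ℝ)+4*(p:ℝ)+1)) * (((11/10)*((k:ℝ)+1)) * ((11/10)*((k:ℝ)+(p:ℝ)+(q:ℝ)+1)) * ((k:ℝ)+(p:ℝ)-(q:ℝ)+1))) :=
        mul_le_mul_of_nonneg_left m3 habs0
    _ ≤ 1/2 * |term p q k| * ((6*(k:ℝ)+4*(p:ℝ)+1) * (8 * ((k:ℝ)+1) * ((k:ℝ)+(p:ℝ)+(q:ℝ)+1) * ((k:ℝ)+(p:ℝ)-(q:ℝ)+1))) := by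
        nlinarith [mul_nonneg habs0 (le_of_lt (mul_pos (mul_pos (mul_pos h61 (show (0:ℝ) < (k:ℝ)+1 by linarith)) hb1) hb2))]

lemma tendsto_Gk (p q : ℤ) (h0 : 0 ≤ q) (hqp : q ≤ p) :
    Tendsto (fun n : ℕ => 16*(n:ℝ)*c p q n) atTop (𝓝 0) := by
  have hsum := summable_term p q h0 hqp
  have ht0 : Tendsto (fun n : ℕ => 3 * |term p q n|) atTop (𝓝 0) := by
    have := (hsum.tendsto_atTop_zero).abs
    simpa using this.const_mul 3
  apply squeeze_zero_norm _ ht0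
  intro n
  have hp0 : (0:ℤ) ≤ p := le_trans h0 hqp
  have hp' : (0:ℝ) ≤ (p:ℝ) := by exact_mod_cast hp0
  have hn : (0:ℝ) ≤ (n:ℝ) := Nat.cast_nonneg n
  have : ‖16*(n:ℝ)*c p q n‖ = 16*(n:ℝ)*|c p q n| := by
    rw [Real.norm_eq_abs, abs_mul, abs_mul]
    simp [abs_of_nonneg hn]
  rw [this]
  have habs : |term p q n| = (6*(n:ℝ)+4*(p:ℝ)+1) * |c p q n| := by
    unfold term
    rw [abs_mul, abs_of_pos (by linarith : (0:ℝ) < 6*(n:ℝ)+4*(p:ℝ)+1)]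
  rw [habs]
  have := abs_nonneg (c p q n)
  nlinarith

lemma S_step (p q : ℤ) (h0 : 0 ≤ q) (hqp : q ≤ p) :
    (∑' k, term (p+1) q k) = 4 * ∑' k, term p q k := by
  have h1 : 0 ≤ p + q := by omega
  have h2 : 0 ≤ p - q := by omega
  have s1 : Summable (term (p+1) q) := summable_term (p+1) q h0 (by omega)
  have s2 : Summable (term p q) := summable_term p q h0 hqp
  have s2' : Summable (fun k => 4 * term p q k) := s2.mul_left 4
  have s3 : Summable (fun k => term (p+1) q k - 4 * term p q k) := s1.sub s2'
  have htel : ∀ n : ℕ, ∑ k ∈ Finset.range n, (term (p+1) q k - 4*term p q k)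
      = 16*(n:ℝ)*c p q n := by
    intro n
    have : ∀ k ∈ Finset.range n, term (p+1) q k - 4*term p q k
        = (fun j : ℕ => 16*(j:ℝ)*c p q j) (k+1) - (fun j : ℕ => 16*(j:ℝ)*c p q j) k := by
      intro k _
      have := wz p q k h1 h2
      simpa using this
    rw [Finset.sum_congr rfl this, Finset.sum_range_sub (fun j : ℕ => 16*(j:ℝ)*c p q j)]
    simp
  have hzero : (∑' k, (term (p+1) q k - 4 * term p q k)) = 0 := by
    have hps := s3.hasSum.tendsto_sum_nat
    have : Tendsto (fun n : ℕ => ∑ k ∈ Finset.range n, (term (p+1) q k - 4*term p q k))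
        atTop (𝓝 0) := by
      simp only [htel]
      exact tendsto_Gk p q h0 hqp
    exact tendsto_nhds_unique hps this
  have := Summable.tsum_sub s1 s2'
  rw [hzero, tsum_mul_left] at this
  linarith

set_option maxHeartbeats 2000000 in
lemma tail_ratio (p q : ℤ) (k : ℕ) (h0 : 0 ≤ q) (hP : 4*q^2+5*q+2 ≤ p) :
    |term p q (k+1)| ≤ (3/4) * |term p q k| := by
  have hqp : q ≤ p := by nlinarith [sq_nonneg q]
  rw [abs_term_succ p q k h0 hqp]
  have hk : (0:ℝ) ≤ (k:ℝ) := Nat.cast_nonneg k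
  have hq' : (0:ℝ) ≤ (q:ℝ) := by exact_mod_cast h0
  have hp' : (q:ℝ) ≤ (p:ℝ) := by exact_mod_cast hqp
  have hPb : 4*(q:ℝ)^2+5*(q:ℝ)+2 ≤ (p:ℝ) := by exact_mod_cast hP
  have hb1 : (0:ℝ) < (k:ℝ)+(p:ℝ)+(q:ℝ)+1 := by linarith
  have hb2 : (0:ℝ) < (k:ℝ)+(p:ℝ)-(q:ℝ)+1 := by linarith
  have h61 : (0:ℝ) < 6*(k:ℝ)+4*(p:ℝ)+1 := by linarith
  have hDen : (0:ℝ) < (6*(k:ℝ)+4*(p:ℝ)+1) * (8 * ((k:ℝ)+1) * ((k:ℝ)+(p:ℝ)+(q:ℝ)+1) * ((k:ℝ)+(p:ℝ)-(q:ℝ)+1)) := by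
    apply mul_pos h61
    apply mul_pos (mul_pos (mul_pos (by norm_num : (0:ℝ) < 8) (by linarith : (0:ℝ) < (k:ℝ)+1)) hb1) hb2
  rw [div_le_iff₀ hDen]
  have habs : |(k:ℝ)-2*q+1/2| ≤ (k:ℝ)+2*q+1 := by
    rw [abs_le]; constructor <;> linarith
  have hp1 : (2:ℝ) ≤ (p:ℝ) := by nlinarith
  have f1 : 6*(k:ℝ)+4*(p:ℝ)+7 ≤ 2*(6*(k:ℝ)+4*(p:ℝ)+1) := by linarith
  have f2 : (k:ℝ)+2*p+1/2 ≤ 3*((k:ℝ)+(p:ℝ)+(q:ℝ)+1) := by linarith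
  have f3 : ((k:ℝ)+2*q+1/2) * |(k:ℝ)-2*q+1/2| ≤ ((k:ℝ)+2*q+1) * ((k:ℝ)+2*q+1) :=
    mul_le_mul (by linarith) habs (abs_nonneg _) (by linarith)
  have f4 : ((k:ℝ)+2*q+1) * ((k:ℝ)+2*q+1) ≤ ((k:ℝ)+1) * ((k:ℝ)+(p:ℝ)-(q:ℝ)+1) := by
    nlinarith [sq_nonneg ((q:ℝ)), mul_nonneg hk hq', mul_nonneg hk (sq_nonneg (q:ℝ))]
  have f34 : ((k:ℝ)+2*q+1/2) * |(k:ℝ)-2*q+1/2| ≤ ((k:ℝ)+1) * ((k:ℝ)+(p:ℝ)-(q:ℝ)+1) := le_trans f3 f4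
  have m2 : ((k:ℝ)+2*p+1/2) * (((k:ℝ)+2*q+1/2) * |(k:ℝ)-2*q+1/2|) ≤
      (3*((k:ℝ)+(p:ℝ)+(q:ℝ)+1)) * (((k:ℝ)+1) * ((k:ℝ)+(p:ℝ)-(q:ℝ)+1)) :=
    mul_le_mul f2 f34 (mul_nonneg (by linarith) (abs_nonneg _)) (by linarith)
  have m3 : (6*(k:ℝ)+4*(p:ℝ)+7) * (((k:ℝ)+2*p+1/2) * (((k:ℝ)+2*q+1/2) * |(k:ℝ)-2*q+1/2|)) ≤
      (2*(6*(k:ℝ)+4*(p:ℝ)+1)) * ((3*((k:ℝ)+(p:ℝ)+(q:ℝ)+1)) * (((k:ℝ)+1) * ((k:ℝ)+(p:ℝ)-(q:ℝ)+1))) :=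
    mul_le_mul f1 m2 (mul_nonneg (by linarith) (mul_nonneg (by linarith) (abs_nonneg _))) (by linarith)
  have habs0 : (0:ℝ) ≤ |term p q k| := abs_nonneg _
  calc |term p q k| * ((6*(k:ℝ)+4*(p:ℝ)+7) * (((k:ℝ)+2*p+1/2) * ((k:ℝ)+2*q+1/2) * |(k:ℝ)-2*q+1/2|))
      ≤ |term p q k| * ((2*(6*(k:ℝ)+4*(p:ℝ)+1)) * ((3*((k:ℝ)+(p:ℝ)+(q:ℝ)+1)) * (((k:ℝ)+1) * ((k:ℝ)+(p:ℝ)-(q:ℝ)+1)))) := by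
        apply mul_le_mul_of_nonneg_left _ habs0
        calc (6*(k:ℝ)+4*(p:ℝ)+7) * (((k:ℝ)+2*p+1/2) * ((k:ℝ)+2*q+1/2) * |(k:ℝ)-2*q+1/2|)
            = (6*(k:ℝ)+4*(p:ℝ)+7) * (((k:ℝ)+2*p+1/2) * (((k:ℝ)+2*q+1/2) * |(k:ℝ)-2*q+1/2|)) := by ring
          _ ≤ _ := m3
    _ = 3/4 * |term p q k| * ((6*(k:ℝ)+4*(p:ℝ)+1) * (8 * ((k:ℝ)+1) * ((k:ℝ)+(p:ℝ)+(q:ℝ)+1) * ((k:ℝ)+(p:ℝ)-(q:ℝ)+1))) := by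
        ring

set_option maxHeartbeats 2000000 in
lemma first_step (p q : ℤ) (h0 : 0 ≤ q) (hP : 4*q^2+5*q+2 ≤ p) :
    |term p q 1| ≤ (8*(2*(q:ℝ)+1)^2/((p:ℝ)+1)) * |term p q 0| := by
  have hqp : q ≤ p := by nlinarith [sq_nonneg q]
  have h := abs_term_succ p q 0 h0 hqp
  simp only [Nat.cast_zero] at h
  rw [show (0:ℕ)+1 = 1 by norm_num] at h
  rw [h]
  have hq' : (0:ℝ) ≤ (q:ℝ) := by exact_mod_cast h0
  have hp' : (q:ℝ) ≤ (p:ℝ) := by exact_mod_cast hqp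
  have hPb : 4*(q:ℝ)^2+5*(q:ℝ)+2 ≤ (p:ℝ) := by exact_mod_cast hP
  have hb1 : (0:ℝ) < (p:ℝ)+(q:ℝ)+1 := by linarith
  have hb2 : (0:ℝ) < (p:ℝ)-(q:ℝ)+1 := by linarith
  have h61 : (0:ℝ) < 4*(p:ℝ)+1 := by linarith
  have hDen : (0:ℝ) < (6*(0:ℝ)+4*(p:ℝ)+1) * (8 * ((0:ℝ)+1) * ((0:ℝ)+(p:ℝ)+(q:ℝ)+1) * ((0:ℝ)+(p:ℝ)-(q:ℝ)+1)) := by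
    norm_num
    apply mul_pos (by linarith : (0:ℝ) < 4*(p:ℝ)+1)
    apply mul_pos (mul_pos (by norm_num : (0:ℝ) < 8) (by linarith : (0:ℝ) < (p:ℝ)+(q:ℝ)+1)) hb2
  rw [div_le_iff₀ (by linarith [hDen] : (0:ℝ) < (6*(0:ℝ)+4*(p:ℝ)+1) * (8 * ((0:ℝ)+1) * ((0:ℝ)+(p:ℝ)+(q:ℝ)+1) * ((0:ℝ)+(p:ℝ)-(q:ℝ)+1)))]
  have habs : |(0:ℝ)-2*q+1/2| ≤ 2*(q:ℝ)+1 := by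
    rw [abs_le]; constructor <;> linarith
  have habs0 : (0:ℝ) ≤ |term p q 0| := abs_nonneg _
  have hpp : (0:ℝ) < (p:ℝ)+1 := by linarith
  -- reduce to pure inequality
  have key : (6*(0:ℝ)+4*(p:ℝ)+7) * (((0:ℝ)+2*p+1/2) * ((0:ℝ)+2*q+1/2) * |(0:ℝ)-2*q+1/2|) ≤
      (8*(2*(q:ℝ)+1)^2/((p:ℝ)+1)) * ((6*(0:ℝ)+4*(p:ℝ)+1) * (8 * ((0:ℝ)+1) * ((0:ℝ)+(p:ℝ)+(q:ℝ)+1) * ((0:ℝ)+(p:ℝ)-(q:ℝ)+1))) := by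
    rw [div_mul_eq_mul_div, le_div_iff₀ hpp]
    have e1 : ((0:ℝ)+2*q+1/2) * |(0:ℝ)-2*q+1/2| ≤ (2*(q:ℝ)+1) * (2*(q:ℝ)+1) :=
      mul_le_mul (by linarith) habs (abs_nonneg _) (by linarith)
    have e2 : (0:ℝ) ≤ (2*(q:ℝ)+1) * (2*(q:ℝ)+1) := by positivity
    have hp0 : (0:ℝ) ≤ (p:ℝ) := by linarith
    have hc : (0:ℝ) ≤ 120*(p:ℝ)^2+144*(p:ℝ)+57/2 := by nlinarith [sq_nonneg (p:ℝ)]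
    have h41 : (0:ℝ) < 4*(p:ℝ)+1 := by linarith
    have hq2 : 2*(q:ℝ)^2 ≤ ((p:ℝ)+1)^2 := by nlinarith [sq_nonneg (q:ℝ)]
    have e3 : (6*(0:ℝ)+4*(p:ℝ)+7) * ((0:ℝ)+2*p+1/2) * ((p:ℝ)+1) ≤ 8 * ((6*(0:ℝ)+4*(p:ℝ)+1) * (8 * ((0:ℝ)+1) * ((0:ℝ)+(p:ℝ)+(q:ℝ)+1) * ((0:ℝ)+(p:ℝ)-(q:ℝ)+1))) := by
      have step1 : (6*(0:ℝ)+4*(p:ℝ)+7) * ((0:ℝ)+2*p+1/2) * ((p:ℝ)+1) ≤ 32*(4*(p:ℝ)+1)*((p:ℝ)+1)^2 := by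
        nlinarith [mul_nonneg hpp.le hc]
      have step2 : 32*(4*(p:ℝ)+1)*((p:ℝ)+1)^2 ≤ 8 * ((6*(0:ℝ)+4*(p:ℝ)+1) * (8 * ((0:ℝ)+1) * ((0:ℝ)+(p:ℝ)+(q:ℝ)+1) * ((0:ℝ)+(p:ℝ)-(q:ℝ)+1))) := by
        nlinarith [mul_nonneg h41.le (show (0:ℝ) ≤ ((p:ℝ)+1)^2 - 2*(q:ℝ)^2 by linarith)]
      linarith
    have e4 : (0:ℝ) ≤ (6*(0:ℝ)+4*(p:ℝ)+7) * ((0:ℝ)+2*p+1/2) * ((p:ℝ)+1) := by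
      apply mul_nonneg (mul_nonneg (by linarith) (by linarith)) (by linarith)
    nlinarith [mul_le_mul e1 e3 e4 e2]
  calc |term p q 0| * ((6*(0:ℝ)+4*(p:ℝ)+7) * (((0:ℝ)+2*p+1/2) * ((0:ℝ)+2*q+1/2) * |(0:ℝ)-2*q+1/2|))
      ≤ |term p q 0| * ((8*(2*(q:ℝ)+1)^2/((p:ℝ)+1)) * ((6*(0:ℝ)+4*(p:ℝ)+1) * (8 * ((0:ℝ)+1) * ((0:ℝ)+(p:ℝ)+(q:ℝ)+1) * ((0:ℝ)+(p:ℝ)-(q:ℝ)+1)))) :=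
        mul_le_mul_of_nonneg_left key habs0
    _ = 8*(2*(q:ℝ)+1)^2/((p:ℝ)+1) * |term p q 0| * ((6*(0:ℝ)+4*(p:ℝ)+1) * (8 * ((0:ℝ)+1) * ((0:ℝ)+(p:ℝ)+(q:ℝ)+1) * ((0:ℝ)+(p:ℝ)-(q:ℝ)+1))) := by ring

lemma tail_geom (p q : ℤ) (h0 : 0 ≤ q) (hP : 4*q^2+5*q+2 ≤ p) :
    ∀ k : ℕ, |term p q (k+1)| ≤ |term p q 1| * (3/4)^k := by
  intro k
  induction k with
  | zero => simp
  | succ k ih =>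
    calc |term p q (k+1+1)| ≤ (3/4) * |term p q (k+1)| := tail_ratio p q (k+1) h0 hP
      _ ≤ (3/4) * (|term p q 1| * (3/4)^k) := by linarith
      _ = |term p q 1| * (3/4)^(k+1) := by ring

set_option maxHeartbeats 2000000 in
lemma tail_sum (p q : ℤ) (h0 : 0 ≤ q) (hP : 4*q^2+5*q+2 ≤ p) :
    |∑' k : ℕ, term p q (k+1)| ≤ (32*(2*(q:ℝ)+1)^2/((p:ℝ)+1)) * |term p q 0| := by
  have hqp : q ≤ p := by nlinarith [sq_nonneg q]
  have hsum : Summable (fun k : ℕ => term p q (k+1)) :=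
    (summable_nat_add_iff 1).2 (summable_term p q h0 hqp)
  have hgeo : Summable (fun k : ℕ => |term p q 1| * (3/4:ℝ)^k) :=
    (summable_geometric_of_lt_one (by norm_num) (by norm_num)).mul_left _
  calc |∑' k : ℕ, term p q (k+1)| = ‖∑' k : ℕ, term p q (k+1)‖ := (Real.norm_eq_abs _).symm
    _ ≤ ∑' k : ℕ, ‖term p q (k+1)‖ :=
        norm_tsum_le_tsum_norm (f := fun k : ℕ => term p q (k+1)) (by simpa [Real.norm_eq_abs] using hsum.abs)
    _ = ∑' k : ℕ, |term p q (k+1)| := by simp [Real.norm_eq_abs]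
    _ ≤ ∑' k : ℕ, |term p q 1| * (3/4:ℝ)^k :=
        Summable.tsum_le_tsum (tail_geom p q h0 hP) hsum.abs hgeo
    _ = |term p q 1| * (1 - 3/4)⁻¹ := by
        rw [tsum_mul_left, tsum_geometric_of_lt_one (by norm_num) (by norm_num)]
    _ = 4 * |term p q 1| := by norm_num; ring
    _ ≤ 4 * ((8*(2*(q:ℝ)+1)^2/((p:ℝ)+1)) * |term p q 0|) := by
        have := first_step p q h0 hP
        linarith
    _ = (32*(2*(q:ℝ)+1)^2/((p:ℝ)+1)) * |term p q 0| := by ring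

lemma term_zero (p q : ℤ) (h0 : 0 ≤ q) (hqp : q ≤ p) :
    term p q 0 = (4*(p:ℝ)+1) * (((4*p.toNat).factorial : ℕ) : ℝ) /
      ((4:ℝ)^(2*p.toNat) * (((2*p.toNat).factorial : ℕ) : ℝ) *
        (((p.toNat + q.toNat).factorial : ℕ) : ℝ) * (((p.toNat - q.toNat).factorial : ℕ) : ℝ)) := by
  set N := p.toNat with hN
  set m := q.toNat with hm
  unfold term c
  have e1 : ((0:ℕ):ℤ) + 2*p = ((2*N : ℕ) : ℤ) := by omega
  have e2 : ((0:ℕ):ℤ) + 2*q = (2*(m:ℤ)) := by omega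
  have e3 : ((0:ℕ):ℤ) - 2*q = -(2*(m:ℤ)) := by omega
  have e4 : (((0:ℕ):ℤ) + p + q).toNat = N + m := by omega
  have e5 : (((0:ℕ):ℤ) + p - q).toNat = N - m := by omega
  rw [e1, e2, e3, e4, e5, sF_nat (2*N)]
  have e6 : sF (2*(m:ℤ)) * sF (-(2*(m:ℤ))) = 1 := sF_mul_neg m
  have hfa : (0:ℝ) < (((N+m).factorial : ℕ) : ℝ) := fact_pos _
  have hfb : (0:ℝ) < (((N-m).factorial : ℕ) : ℝ) := fact_pos _
  have hfc : (0:ℝ) < (((2*N).factorial : ℕ) : ℝ) := fact_pos _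
  have h4 : (0:ℝ) < (4:ℝ)^(2*N) := by positivity
  rw [show 2*(2*N) = 4*N by ring]
  simp only [Nat.cast_zero, Nat.factorial_zero, Nat.cast_one, pow_zero]
  have e7 : (((4*N).factorial : ℕ) : ℝ) / ((4:ℝ)^(2*N) * (((2*N).factorial : ℕ):ℝ)) * sF (2*(m:ℤ)) * sF (-(2*(m:ℤ)))
      = (((4*N).factorial : ℕ) : ℝ) / ((4:ℝ)^(2*N) * (((2*N).factorial : ℕ):ℝ)) := by
    rw [mul_assoc, e6, mul_one]
  rw [e7]
  ring

noncomputable def w (n : ℕ) : ℝ := (((2*n).factorial : ℕ) : ℝ) / (((n.factorial : ℕ):ℝ)^2 * 4^n) * Real.sqrt n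

lemma stirlingSeq_pos (n : ℕ) (h : 1 ≤ n) : 0 < Stirling.stirlingSeq n := by
  unfold Stirling.stirlingSeq
  have h1 : (0:ℝ) < (n.factorial : ℝ) := fact_pos n
  have h2 : (0:ℝ) < Real.sqrt (2*n) := Real.sqrt_pos.2 (by positivity)
  have hn : (0:ℝ) < (n:ℝ) := by exact_mod_cast h
  have h3 : (0:ℝ) < ((n:ℝ) / Real.exp 1)^n := by positivity
  positivity

lemma div_sq_helper (G F Y Z X c : ℝ) (hF : F ≠ 0) (hY : Y ≠ 0) (hZ : Z ≠ 0) (hX : X ≠ 0)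
    (hc : c ≠ 0) (h : Z^2 = 2*(Y*Y)) :
    G/(F^2*c)*Y = G/(2*Y*(c*X^2)) / (F/(Z*X))^2 := by
  rw [div_pow, div_div_eq_mul_div, mul_pow, h]
  field_simp

lemma w_eq_stirling (n : ℕ) (h : 1 ≤ n) :
    w n = Stirling.stirlingSeq (2*n) / (Stirling.stirlingSeq n)^2 := by
  unfold w Stirling.stirlingSeq
  have hn : (0:ℝ) < (n:ℝ) := by exact_mod_cast h
  have hfn : (0:ℝ) < (n.factorial : ℝ) := fact_pos n
  have hf2n : (0:ℝ) < ((2*n).factorial : ℝ) := fact_pos (2*n)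
  have he : (0:ℝ) < Real.exp 1 := Real.exp_pos 1
  have hx : (0:ℝ) < (n:ℝ) / Real.exp 1 := by positivity
  have hc : ((2*n : ℕ) : ℝ) = 2*(n:ℝ) := by push_cast; ring
  rw [hc]
  have hs2 : Real.sqrt (2*(2*(n:ℝ))) = 2 * Real.sqrt (n:ℝ) := by
    rw [show (2:ℝ)*(2*(n:ℝ)) = 2^2 * (n:ℝ) by ring, Real.sqrt_mul (by norm_num) ((n:ℝ)),
      Real.sqrt_sq (by norm_num)]
  rw [hs2]
  have hpow : ((2*(n:ℝ)) / Real.exp 1)^(2*n) = 4^n * (((n:ℝ)/Real.exp 1)^n)^2 := by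
    rw [show (2*(n:ℝ)) / Real.exp 1 = 2 * ((n:ℝ)/Real.exp 1) by ring, mul_pow,
      show ((2:ℝ))^(2*n) = 4^n by rw [pow_mul]; norm_num,
      show ((n:ℝ)/Real.exp 1)^(2*n) = (((n:ℝ)/Real.exp 1)^n)^2 by rw [← pow_mul, mul_comm]]
  rw [hpow]
  have hsn : Real.sqrt (n:ℝ) * Real.sqrt (n:ℝ) = (n:ℝ) := Real.mul_self_sqrt hn.le
  have hsq : Real.sqrt (2*(n:ℝ)) ^ 2 = 2*(Real.sqrt (n:ℝ) * Real.sqrt (n:ℝ)) := by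
    rw [hsn]; exact Real.sq_sqrt (by positivity)
  have hs2n : (0:ℝ) < Real.sqrt (2*(n:ℝ)) := Real.sqrt_pos.2 (by positivity)
  have hsnp : (0:ℝ) < Real.sqrt (n:ℝ) := Real.sqrt_pos.2 hn
  have hxn : (0:ℝ) < ((n:ℝ)/Real.exp 1)^n := by positivity
  exact div_sq_helper _ _ _ _ _ _ hfn.ne' hsnp.ne' hs2n.ne' (by positivity) (by positivity) hsq

lemma tendsto_w : Tendsto w atTop (𝓝 (Real.sqrt π / π)) := by
  have h2n : Tendsto (fun n : ℕ => 2*n) atTop atTop :=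
    tendsto_atTop_mono (fun n => by omega : ∀ n : ℕ, n ≤ 2*n) tendsto_id
  have hA : Tendsto (fun n : ℕ => Stirling.stirlingSeq (2*n)) atTop (𝓝 (Real.sqrt π)) :=
    Stirling.tendsto_stirlingSeq_sqrt_pi.comp h2n
  have hB : Tendsto (fun n : ℕ => (Stirling.stirlingSeq n)^2) atTop (𝓝 ((Real.sqrt π)^2)) :=
    Stirling.tendsto_stirlingSeq_sqrt_pi.pow 2
  have hpi : (Real.sqrt π)^2 = π := Real.sq_sqrt Real.pi_pos.le
  have hne : ((Real.sqrt π)^2 : ℝ) ≠ 0 := by rw [hpi]; exact Real.pi_ne_zero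
  have := hA.div hB hne
  rw [hpi] at this
  apply this.congr'
  filter_upwards [eventually_ge_atTop 1] with n hn
  exact (w_eq_stirling n hn).symm

lemma fact_ratio (m : ℕ) : ∀ N : ℕ, m ≤ N →
    ((N.factorial : ℕ) : ℝ)^2 * ∏ i ∈ Finset.range m, ((N:ℝ)+i+1) =
      (((N+m).factorial : ℕ) : ℝ) * (((N-m).factorial : ℕ) : ℝ) * ∏ i ∈ Finset.range m, ((N:ℝ)-i) := by
  induction m with
  | zero => intro N _; simp [pow_two]
  | succ m ih =>
    intro N hm
    have hmN : m ≤ N := by omega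
    rw [Finset.prod_range_succ, Finset.prod_range_succ]
    have hfs : ((N+(m+1)).factorial : ℝ) = (((N+m).factorial : ℝ)) * ((N:ℝ)+m+1) := by
      rw [show N+(m+1) = (N+m)+1 by ring, Nat.factorial_succ]
      push_cast; ring
    have hfs2 : (((N-m).factorial) : ℝ) = (((N-(m+1)).factorial : ℝ)) * ((N:ℝ)-m) := by
      rw [show N-m = (N-(m+1))+1 by omega, Nat.factorial_succ, Nat.cast_mul]
      have hc2 : ((N-(m+1)+1 : ℕ):ℝ) = (N:ℝ)-(m:ℝ) := by
        push_cast [Nat.cast_sub (show m+1 ≤ N by omega)]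
        ring
      rw [hc2]; ring
    have := ih N hmN
    rw [hfs, hfs2] at *
    nlinarith [this]

lemma tendsto_rho (m : ℕ) :
    Tendsto (fun N : ℕ => ((N.factorial : ℕ) : ℝ)^2 / ((((N+m).factorial : ℕ) : ℝ) * (((N-m).factorial : ℕ) : ℝ)))
      atTop (𝓝 1) := by
  have hfac : ∀ i : ℕ, Tendsto (fun N : ℕ => ((N:ℝ)-i)/((N:ℝ)+i+1)) atTop (𝓝 1) := by
    intro i
    have hden : Tendsto (fun N : ℕ => ((N:ℝ)+i+1)) atTop atTop := by
      apply tendsto_atTop_add_const_right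
      apply tendsto_atTop_add_const_right
      exact tendsto_natCast_atTop_atTop
    have hz : Tendsto (fun N : ℕ => (2*(i:ℝ)+1)/((N:ℝ)+i+1)) atTop (𝓝 0) :=
      hden.const_div_atTop _
    have : Tendsto (fun N : ℕ => 1 - (2*(i:ℝ)+1)/((N:ℝ)+i+1)) atTop (𝓝 (1-0)) :=
      tendsto_const_nhds.sub hz
    rw [sub_zero] at this
    apply this.congr'
    filter_upwards [eventually_ge_atTop 1] with N hN
    have hpos : (0:ℝ) < (N:ℝ)+i+1 := by positivity
    field_simp
    ring
  have hprod : Tendsto (fun N : ℕ => ∏ i ∈ Finset.range m, (((N:ℝ)-i)/((N:ℝ)+i+1)))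
      atTop (𝓝 (∏ _i ∈ Finset.range m, (1:ℝ))) :=
    tendsto_finset_prod _ (fun i _ => hfac i)
  rw [Finset.prod_const_one] at hprod
  apply hprod.congr'
  filter_upwards [eventually_ge_atTop m] with N hN
  have hkey := fact_ratio m N hN
  have hp1 : (0:ℝ) < ∏ i ∈ Finset.range m, ((N:ℝ)+i+1) := by
    apply Finset.prod_pos; intro i _; positivity
  have hfa : (0:ℝ) < (((N+m).factorial : ℕ) : ℝ) := fact_pos _
  have hfb : (0:ℝ) < (((N-m).factorial : ℕ) : ℝ) := fact_pos _
  rw [Finset.prod_div_distrib, div_eq_div_iff hp1.ne' (mul_pos hfa hfb).ne']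
  linarith [hkey]

noncomputable def T0 (m N : ℕ) : ℝ :=
  (4*(N:ℝ)+1) * (((4*N).factorial : ℕ):ℝ) /
    ((4:ℝ)^(3*N+1) * (((2*N).factorial : ℕ):ℝ) * (((N+m).factorial : ℕ):ℝ) * (((N-m).factorial : ℕ):ℝ))

lemma T0_pos (m N : ℕ) : 0 < T0 m N := by
  unfold T0
  apply div_pos
  · have := fact_pos (4*N)
    have hN : (0:ℝ) ≤ (N:ℝ) := Nat.cast_nonneg N
    nlinarith
  · have h1 := fact_pos (2*N)
    have h2 := fact_pos (N+m)
    have h3 := fact_pos (N-m)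
    have h4 : (0:ℝ) < (4:ℝ)^(3*N+1) := by positivity
    nlinarith [mul_pos (mul_pos h4 h1) h2]

lemma T0_eq (m N : ℕ) (h : 1 ≤ N) :
    T0 m N = w (2*N) * w N *
      (((N.factorial : ℕ):ℝ)^2 / ((((N+m).factorial : ℕ):ℝ) * (((N-m).factorial : ℕ):ℝ))) *
      ((4*(N:ℝ)+1)/(4*Real.sqrt 2*(N:ℝ))) := by
  unfold T0 w
  have hc : ((2*N : ℕ) : ℝ) = 2*(N:ℝ) := by push_cast; ring
  rw [show 2*(2*N) = 4*N by ring, hc]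
  have hs2 : Real.sqrt (2*(N:ℝ)) = Real.sqrt 2 * Real.sqrt (N:ℝ) :=
    Real.sqrt_mul (by norm_num) _
  rw [hs2]
  have hN : (0:ℝ) < (N:ℝ) := by exact_mod_cast h
  set S := Real.sqrt (N:ℝ) with hSdef
  have hS : S*S = (N:ℝ) := Real.mul_self_sqrt hN.le
  have hSpos : 0 < S := Real.sqrt_pos.2 hN
  have hr2 : (0:ℝ) < Real.sqrt 2 := Real.sqrt_pos.2 (by norm_num)
  have hf1 := fact_pos (4*N)
  have hf2 := fact_pos (2*N)
  have hf3 := fact_pos N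
  have hf4 := fact_pos (N+m)
  have hf5 := fact_pos (N-m)
  have h4a : (0:ℝ) < (4:ℝ)^N := by positivity
  have h4b : (0:ℝ) < (4:ℝ)^(2*N) := by positivity
  have hpow : (4:ℝ)^(3*N+1) = (4:ℝ)^(2*N) * (4:ℝ)^N * 4 := by
    rw [← pow_add, ← pow_succ]
    congr 1
    ring
  rw [hpow, ← hS]
  field_simp

lemma tendsto_last : Tendsto (fun N : ℕ => (4*(N:ℝ)+1)/(4*Real.sqrt 2*(N:ℝ)))
    atTop (𝓝 (4 * (1/(4*Real.sqrt 2)))) := by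
  have t1 : Tendsto (fun N : ℕ => (4*(N:ℝ)+1)/(N:ℝ)) atTop (𝓝 4) := by
    have : Tendsto (fun N : ℕ => 4 + 1/(N:ℝ)) atTop (𝓝 (4+0)) :=
      tendsto_const_nhds.add tendsto_one_div_atTop_nhds_zero_nat
    rw [add_zero] at this
    apply this.congr'
    filter_upwards [eventually_ge_atTop 1] with N hN
    have hN : (0:ℝ) < (N:ℝ) := by exact_mod_cast hN
    field_simp
  have := t1.mul (tendsto_const_nhds (x := 1/(4*Real.sqrt 2)) (f := atTop))
  apply this.congr
  intro N
  ring

lemma tendsto_T0 (m : ℕ) : Tendsto (T0 m) atTop (𝓝 (1/(Real.sqrt 2 * π))) := by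
  have h2n : Tendsto (fun n : ℕ => 2*n) atTop atTop :=
    tendsto_atTop_mono (fun n => by omega : ∀ n : ℕ, n ≤ 2*n) tendsto_id
  have hw2 : Tendsto (fun N : ℕ => w (2*N)) atTop (𝓝 (Real.sqrt π / π)) := tendsto_w.comp h2n
  have hcomb := ((hw2.mul tendsto_w).mul (tendsto_rho m)).mul tendsto_last
  have hval : (Real.sqrt π / π * (Real.sqrt π / π) * 1) * (4 * (1/(4*Real.sqrt 2))) =
      1/(Real.sqrt 2 * π) := by
    have hpi : Real.sqrt π * Real.sqrt π = π := Real.mul_self_sqrt Real.pi_pos.le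
    have hr2 : (0:ℝ) < Real.sqrt 2 := Real.sqrt_pos.2 (by norm_num)
    field_simp
    nlinarith [hpi, Real.pi_pos]
  rw [hval] at hcomb
  apply hcomb.congr'
  filter_upwards [eventually_ge_atTop 1] with N hN
  exact (T0_eq m N hN).symm

lemma term_zero_div (q : ℤ) (h0 : 0 ≤ q) (N : ℕ) (hq : q ≤ (N:ℤ)) :
    term (N:ℤ) q 0 / 4^(N+1) = T0 q.toNat N := by
  rw [term_zero (N:ℤ) q h0 hq, Int.toNat_natCast]
  unfold T0
  rw [show ((N:ℤ):ℝ) = (N:ℝ) by push_cast; rfl]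
  rw [show (4:ℝ)^(3*N+1) = (4:ℝ)^(2*N) * (4:ℝ)^(N+1) by rw [← pow_add]; congr 1; ring]
  have h1 := fact_pos (2*N)
  have h2 := fact_pos (N + q.toNat)
  have h3 := fact_pos (N - q.toNat)
  have h4 : (0:ℝ) < (4:ℝ)^(2*N) := by positivity
  have h5 : (0:ℝ) < (4:ℝ)^(N+1) := by positivity
  field_simp

set_option maxHeartbeats 1000000 in
lemma lim_S (q : ℤ) (h0 : 0 ≤ q) :
    Tendsto (fun N : ℕ => (∑' k, term (N:ℤ) q k) / 4^(N+1)) atTop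
      (𝓝 (1/(Real.sqrt 2 * π))) := by
  set m := q.toNat with hm
  have hmq : ((m:ℕ):ℤ) = q := Int.toNat_of_nonneg h0
  have hT := tendsto_T0 m
  have hq2 : (0:ℤ) ≤ 4*q^2+5*q+2 := by nlinarith [sq_nonneg q]
  have hE : Tendsto (fun N : ℕ => (∑' k, term (N:ℤ) q k)/4^(N+1) - T0 m N) atTop (𝓝 0) := by
    have hden : Tendsto (fun N : ℕ => ((N:ℝ)+1)) atTop atTop :=
      tendsto_atTop_add_const_right _ _ tendsto_natCast_atTop_atTop
    have hbnd : Tendsto (fun N : ℕ => (32*(2*(q:ℝ)+1)^2/((N:ℝ)+1)) * T0 m N) atTop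
        (𝓝 (0*(1/(Real.sqrt 2*π)))) :=
      Tendsto.mul (hden.const_div_atTop _) hT
    rw [zero_mul] at hbnd
    apply squeeze_zero_norm' _ hbnd
    filter_upwards [eventually_ge_atTop ((4*q^2+5*q+2).toNat + m + 1)] with N hN
    have htt : (((4*q^2+5*q+2).toNat : ℕ) : ℤ) = 4*q^2+5*q+2 := Int.toNat_of_nonneg hq2
    have hNc : (((4*q^2+5*q+2).toNat + m + 1 : ℕ) : ℤ) ≤ ((N:ℕ):ℤ) := by exact_mod_cast hN
    push_cast at hNc
    rw [htt] at hNc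
    have hqN : q ≤ (N:ℤ) := by nlinarith [sq_nonneg q, hmq, Int.toNat_of_nonneg h0]
    have hPN : 4*q^2+5*q+2 ≤ (N:ℤ) := by
      have : (0:ℤ) ≤ (m:ℤ) := by positivity
      linarith
    have hsum := summable_term (N:ℤ) q h0 hqN
    have hdec := Summable.tsum_eq_zero_add hsum
    have ht0 : term (N:ℤ) q 0 / 4^(N+1) = T0 m N := term_zero_div q h0 N hqN
    have hT0pos := T0_pos m N
    have h4p : (0:ℝ) < (4:ℝ)^(N+1) := by positivity
    have hterm0pos : 0 < term (N:ℤ) q 0 := by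
      have he : term (N:ℤ) q 0 = T0 m N * 4^(N+1) := by
        rw [← ht0]; field_simp
      rw [he]; exact mul_pos hT0pos h4p
    have htail := tail_sum (N:ℤ) q h0 hPN
    rw [abs_of_pos hterm0pos] at htail
    have hcast : (((N:ℤ)):ℝ) = (N:ℝ) := by push_cast; rfl
    rw [hcast] at htail
    rw [Real.norm_eq_abs]
    have hEeq : (∑' k, term (N:ℤ) q k)/4^(N+1) - T0 m N
        = (∑' k : ℕ, term (N:ℤ) q (k+1))/4^(N+1) := by
      rw [hdec, ← ht0]; ring
    rw [hEeq, abs_div, abs_of_pos h4p, div_le_iff₀ h4p]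
    have hrhs : (32*(2*(q:ℝ)+1)^2/((N:ℝ)+1)) * T0 m N * 4^(N+1)
        = (32*(2*(q:ℝ)+1)^2/((N:ℝ)+1)) * term (N:ℤ) q 0 := by
      rw [← ht0]; field_simp
    rw [hrhs]
    exact htail
  have hfinal := hT.add hE
  rw [add_zero] at hfinal
  apply hfinal.congr
  intro N
  ring

lemma S_pow (p q : ℤ) (h0 : 0 ≤ q) (hqp : q ≤ p) :
    ∀ n : ℕ, (∑' k, term (p+(n:ℤ)) q k) = 4^n * ∑' k, term p q k := by
  intro n
  induction n with
  | zero => simp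
  | succ n ih =>
    rw [show (p + ((n+1:ℕ):ℤ)) = (p + (n:ℤ)) + 1 by push_cast; ring,
      S_step (p+(n:ℤ)) q h0 (by omega), ih]
    ring

lemma main_lemma (p q : ℤ) (h0 : 0 ≤ q) (hqp : q ≤ p) :
    (∑' k, term p q k) = (4:ℝ)^(p+1)/(Real.sqrt 2 * π) := by
  have h4 : (4:ℝ) ≠ 0 := by norm_num
  have hconst : ∀ n : ℕ, (∑' k, term (p+(n:ℤ)) q k) / (4:ℝ)^((p+(n:ℤ))+1)
      = (∑' k, term p q k) / (4:ℝ)^(p+1) := by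
    intro n
    rw [S_pow p q h0 hqp n, show (p+(n:ℤ))+1 = (p+1) + (n:ℤ) by ring, zpow_add₀ h4,
      zpow_natCast, mul_comm ((4:ℝ)^(p+1)) ((4:ℝ)^n)]
    exact mul_div_mul_left _ _ (by positivity)
  have hcomp : Tendsto (fun n : ℕ => (p+(n:ℤ)).toNat) atTop atTop := by
    apply Filter.tendsto_atTop_atTop.2
    intro b
    refine ⟨b + p.natAbs + 1, fun n hn => ?_⟩
    omega
  have hLS := (lim_S q h0).comp hcomp
  have huL : Tendsto (fun n : ℕ => (∑' k, term (p+(n:ℤ)) q k) / (4:ℝ)^((p+(n:ℤ))+1))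
      atTop (𝓝 (1/(Real.sqrt 2 * π))) := by
    apply hLS.congr
    intro n
    simp only [Function.comp]
    have e : (((p+(n:ℤ)).toNat : ℕ) : ℤ) = p + (n:ℤ) := Int.toNat_of_nonneg (by omega)
    rw [e]
    have e2 : (4:ℝ)^(((p+(n:ℤ)).toNat)+1) = (4:ℝ)^((p+(n:ℤ))+1) := by
      rw [← zpow_natCast]
      congr 1
      push_cast [e]
      omega
    rw [e2]
  have hconst' : Tendsto (fun _ : ℕ => (∑' k, term p q k) / (4:ℝ)^(p+1)) atTop
      (𝓝 (1/(Real.sqrt 2 * π))) := huL.congr hconst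
  have hkey : (∑' k, term p q k) / (4:ℝ)^(p+1) = 1/(Real.sqrt 2 * π) :=
    tendsto_nhds_unique tendsto_const_nhds hconst'
  have h4p : ((4:ℝ)^(p+1)) ≠ 0 := zpow_ne_zero _ h4
  have hne : Real.sqrt 2 * π ≠ 0 :=
    mul_ne_zero (Real.sqrt_pos.2 (by norm_num)).ne' Real.pi_ne_zero
  rw [eq_div_iff hne]
  field_simp at hkey
  linarith [hkey]

lemma summand_eq (p q : ℤ) (k : ℕ) :
    (shiftedFactorial (1/2) ((k : ℤ) + 2*p) * shiftedFactorial (1/2) ((k : ℤ) + 2*q) *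
          shiftedFactorial (1/2) ((k : ℤ) - 2*q)) /
        ((k.factorial : ℝ) * (((k : ℤ) + p + q).toNat.factorial : ℝ) *
          (((k : ℤ) + p - q).toNat.factorial : ℝ)) *
        ((6*(k : ℝ) + 4*(p : ℝ) + 1) / (-8 : ℝ) ^ k) = term p q k := by
  unfold term c sF
  ring

lemma summand_eq_neg (p q : ℤ) (k : ℕ) :
    (shiftedFactorial (1/2) ((k : ℤ) + 2*p) * shiftedFactorial (1/2) ((k : ℤ) + 2*q) *
          shiftedFactorial (1/2) ((k : ℤ) - 2*q)) /
        ((k.factorial : ℝ) * (((k : ℤ) + p + q).toNat.factorial : ℝ) *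
          (((k : ℤ) + p - q).toNat.factorial : ℝ)) *
        ((6*(k : ℝ) + 4*(p : ℝ) + 1) / (-8 : ℝ) ^ k) = term p (-q) k := by
  unfold term c sF
  rw [show (k:ℤ)+2*(-q) = (k:ℤ)-2*q by ring,
      show (k:ℤ)-2*(-q) = (k:ℤ)+2*q by ring,
      show (k:ℤ)+p+(-q) = (k:ℤ)+p-q by ring,
      show (k:ℤ)+p-(-q) = (k:ℤ)+p+q by ring]
  ring

end WG

theorem wei_gong_thm3 (p q : ℤ)
    (h : 0 ≤ min (p + q) (p - q)) :
    (4 : ℝ) ^ (p + 1) / (Real.sqrt 2 * Real.pi) =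
      ∑' k : ℕ,
        (shiftedFactorial (1/2) ((k : ℤ) + 2*p) * shiftedFactorial (1/2) ((k : ℤ) + 2*q) *
          shiftedFactorial (1/2) ((k : ℤ) - 2*q)) /
        ((k.factorial : ℝ) * (((k : ℤ) + p + q).toNat.factorial : ℝ) *
          (((k : ℤ) + p - q).toNat.factorial : ℝ)) *
        ((6*(k : ℝ) + 4*(p : ℝ) + 1) / (-8 : ℝ) ^ k) := by
  have h1 : 0 ≤ p + q := le_trans h (min_le_left _ _)
  have h2 : 0 ≤ p - q := le_trans h (min_le_right _ _)
  rcases le_or_gt 0 q with hq | hq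
  · rw [tsum_congr (fun k => WG.summand_eq p q k), WG.main_lemma p q hq (by omega)]
  · rw [tsum_congr (fun k => WG.summand_eq_neg p q k),
      WG.main_lemma p (-q) (by omega) (by omega)]
end

section
/- ∑_{k=0}^∞ (5/2)_k^3 / [(k!)^2 · (k+2)!] · (6k+5)/4^k = 256/(3π). -/
/-- The Pochhammer symbol `(x)ₖ = x (x+1) ⋯ (x+k-1)`, with `(x)₀ = 1`. -/
noncomputable def poch (x : ℝ) (k : ℕ) : ℝ :=
  ∏ i ∈ Finset.range k, (x + i)

/-!
Write `c n = C(2n, n)³ / 256ⁿ`. Up to the factor `1024 / 27`, the `k`-th summand is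
`c n · n² (n - 1)² (6n - 7)` at `n = k + 2`, and Gosper's algorithm splits this into
`(9/16) (6n + 1) c n` plus a telescoping difference. The theorem thus reduces to Bauer's series
`∑ (6n + 1) c n = 4 / π`, which we prove by the WZ method: for
`H n k = c n · (C(2k, k) / 4ᵏ)² / C(n + k, k)²` the sums `∑ₙ (6n + 4k + 1) H n k` do not depend
on `k`, and as `k → ∞` only the `n = 0` term `(4k + 1) (C(2k, k) / 4ᵏ)²` survives, which tends
to `4 / π` by Wallis' product.
-/

open Filter Finset Topology Real

theorem Summable.hasSum_sub_succ {G : Type*} [AddCommGroup G] [TopologicalSpace G]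
    [IsTopologicalAddGroup G] [T2Space G] {g : ℕ → G} (hg : Summable g) :
    HasSum (fun n ↦ g (n + 1) - g n) (-g 0) := by
  have hsum : Summable fun n ↦ g (n + 1) - g n := ((summable_nat_add_iff 1).mpr hg).sub hg
  rw [hsum.hasSum_iff_tendsto_nat]
  simp only [sum_range_sub]
  simpa using hg.tendsto_atTop_zero.sub_const (g 0)

theorem summable_mul_geometric_of_abs_le_mul_pow {r : ℝ} (hr : |r| < 1) {f : ℕ → ℝ} {C : ℝ}
    (d : ℕ) (hf : ∀ n, |f n| ≤ C * (n + 1) ^ d) : Summable fun n ↦ f n * r ^ n := by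
  have hg : Summable fun n : ℕ ↦ C * 2 ^ (d - 1) * (((n : ℝ) ^ d + 1) * |r| ^ n) := by
    refine Summable.mul_left _ ?_
    simp only [add_mul, one_mul]
    exact (summable_pow_mul_geometric_of_norm_lt_one d (by simpa using hr)).add
      (summable_geometric_of_lt_one (abs_nonneg r) hr)
  refine Summable.of_norm_bounded hg fun n ↦ ?_
  have hC : 0 ≤ C := (abs_nonneg _).trans ((hf 0).trans (by simp))
  rw [Real.norm_eq_abs, abs_mul, abs_pow]
  calc |f n| * |r| ^ n ≤ C * (n + 1) ^ d * |r| ^ n := by gcongr; exact hf n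
    _ ≤ C * (2 ^ (d - 1) * ((n : ℝ) ^ d + 1 ^ d)) * |r| ^ n := by
        gcongr; exact add_pow_le (by positivity) zero_le_one d
    _ = _ := by ring

/-- Creative telescoping makes `∑ₙ F n k` independent of `k`; dominated convergence then
identifies it with the sum of the termwise limits as `k → ∞`. -/
theorem hasSum_of_wz {F G : ℕ → ℕ → ℝ} {bound L : ℕ → ℝ} {l : ℝ}
    (hwz : ∀ n k, F n (k + 1) - F n k = G (n + 1) k - G n k)
    (hG : ∀ k, Summable (G · k)) (hG0 : ∀ k, G 0 k = 0)
    (hbound : Summable bound) (hF : ∀ n k, |F n k| ≤ bound n)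
    (hL : ∀ n, Tendsto (F n ·) atTop (𝓝 (L n))) (hl : HasSum L l) :
    HasSum (F · 0) l := by
  have hFs (k : ℕ) : Summable (F · k) := Summable.of_norm_bounded hbound (hF · k)
  have hsucc (k : ℕ) : ∑' n, F n (k + 1) = ∑' n, F n k := by
    have h := (hFs (k + 1)).hasSum.sub (hFs k).hasSum
    simp only [hwz] at h
    exact sub_eq_zero.mp (by simpa [hG0] using h.unique (hG k).hasSum_sub_succ)
  have hconst (k : ℕ) : ∑' n, F n k = ∑' n, F n 0 := by
    induction k with
    | zero => rfl
    | succ k ih => rw [hsucc, ih]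
  have hlim := tendsto_tsum_of_dominated_convergence hbound hL (.of_forall fun k n ↦ hF n k)
  simp only [hconst, hl.tsum_eq] at hlim
  rw [← tendsto_const_nhds_iff.mp hlim]
  exact (hFs 0).hasSum

noncomputable def centralBinomRatio (n : ℕ) : ℝ := n.centralBinom / 4 ^ n

local notation "ρ" => centralBinomRatio

@[simp] lemma centralBinomRatio_zero : ρ 0 = 1 := by simp [centralBinomRatio]

lemma centralBinomRatio_succ (n : ℕ) : ρ (n + 1) = ρ n * ((2 * n + 1) / (2 * n + 2)) := by
  have h : ((n + 1 : ℕ) : ℝ) * (n + 1).centralBinom = 2 * (2 * n + 1) * n.centralBinom := by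
    exact_mod_cast n.succ_mul_centralBinom_succ
  simp only [centralBinomRatio, pow_succ]
  field_simp
  push_cast at h
  linear_combination 2 * h

lemma centralBinomRatio_pos (n : ℕ) : 0 < ρ n := by
  unfold centralBinomRatio
  have := n.centralBinom_pos
  positivity

lemma centralBinomRatio_le_one (n : ℕ) : ρ n ≤ 1 := by
  rw [centralBinomRatio, div_le_one (by positivity)]
  exact_mod_cast n.centralBinom_le_four_pow

lemma wallis_mul_centralBinomRatio_sq (k : ℕ) : Wallis.W k * ((2 * k + 1) * ρ k ^ 2) = 1 := by
  induction k with
  | zero => simp [Wallis.W]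
  | succ k ih =>
    refine Eq.trans ?_ ih
    rw [Wallis.W_succ, centralBinomRatio_succ]
    push_cast
    field_simp
    ring

lemma mul_centralBinomRatio_sq_le_one (k : ℕ) : (2 * k + 1) * ρ k ^ 2 ≤ 1 := by
  induction k with
  | zero => simp
  | succ k ih =>
    have hk : (2 * k + 1) * (2 * k + 3) ≤ ((2 : ℝ) * k + 2) ^ 2 := by nlinarith
    calc (2 * ((k + 1 : ℕ) : ℝ) + 1) * ρ (k + 1) ^ 2
        = (2 * k + 1) * ρ k ^ 2 * ((2 * k + 1) * (2 * k + 3) / (2 * k + 2) ^ 2) := by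
          rw [centralBinomRatio_succ]; push_cast; field_simp; ring
      _ ≤ 1 := mul_le_one₀ ih (by positivity) ((div_le_one (by positivity)).mpr hk)

lemma tendsto_mul_centralBinomRatio_sq :
    Tendsto (fun k : ℕ ↦ (2 * k + 1) * ρ k ^ 2) atTop (𝓝 (2 / π)) := by
  have h := Wallis.tendsto_W_nhds_pi_div_two.inv₀ (by positivity)
  rw [inv_div] at h
  refine h.congr fun k ↦ ?_
  rw [inv_eq_of_mul_eq_one_right (wallis_mul_centralBinomRatio_sq k)]

lemma tendsto_mul_four_add_one_centralBinomRatio_sq :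
    Tendsto (fun k : ℕ ↦ (4 * k + 1) * ρ k ^ 2) atTop (𝓝 (4 / π)) := by
  have hsq : Tendsto (fun k : ℕ ↦ ρ k ^ 2) atTop (𝓝 0) := by
    refine squeeze_zero (fun k ↦ by positivity) (fun k ↦ ?_)
      (tendsto_one_div_add_atTop_nhds_zero_nat (𝕜 := ℝ))
    rw [le_div_iff₀ (by positivity)]
    nlinarith [mul_centralBinomRatio_sq_le_one k, sq_nonneg (ρ k)]
  have h := (tendsto_mul_centralBinomRatio_sq.const_mul 2).sub hsq
  rw [show 2 * (2 / π) - 0 = 4 / π by ring] at h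
  exact h.congr fun k ↦ by ring

noncomputable def bauerCoeff (n : ℕ) : ℝ := ρ n ^ 3 / 4 ^ n

lemma bauerCoeff_succ (n : ℕ) :
    bauerCoeff (n + 1) = bauerCoeff n * ((2 * n + 1) / (2 * n + 2)) ^ 3 / 4 := by
  simp only [bauerCoeff, centralBinomRatio_succ, pow_succ]
  field_simp

lemma bauerCoeff_nonneg (n : ℕ) : 0 ≤ bauerCoeff n := by
  unfold bauerCoeff
  have := centralBinomRatio_pos n
  positivity

lemma bauerCoeff_le (n : ℕ) : bauerCoeff n ≤ (1 / 4) ^ n := by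
  rw [bauerCoeff, one_div_pow, div_le_div_iff_of_pos_right (by positivity)]
  exact pow_le_one₀ (centralBinomRatio_pos n).le (centralBinomRatio_le_one n)

lemma summable_mul_bauerCoeff {f : ℕ → ℝ} {C : ℝ} (d : ℕ) (hf : ∀ n, |f n| ≤ C * (n + 1) ^ d) :
    Summable fun n ↦ f n * bauerCoeff n := by
  have hbound (n : ℕ) : |f n * ρ n ^ 3| ≤ C * (n + 1) ^ d := by
    have hρ := centralBinomRatio_pos n
    rw [abs_mul, abs_of_pos (pow_pos hρ 3)]
    exact (mul_le_of_le_one_right (abs_nonneg _) (pow_le_one₀ hρ.le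
      (centralBinomRatio_le_one n))).trans (hf n)
  refine (summable_mul_geometric_of_abs_le_mul_pow (r := 1 / 4) (by norm_num) d hbound).congr
    fun n ↦ ?_
  rw [bauerCoeff, one_div_pow]
  ring

noncomputable def wzKernel (n k : ℕ) : ℝ := bauerCoeff n * (ρ k / (n + k).choose k) ^ 2

lemma wzKernel_zero_left (k : ℕ) : wzKernel 0 k = ρ k ^ 2 := by
  simp [wzKernel, bauerCoeff]

lemma wzKernel_zero_right (n : ℕ) : wzKernel n 0 = bauerCoeff n := by
  simp [wzKernel]

lemma wzKernel_nonneg (n k : ℕ) : 0 ≤ wzKernel n k :=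
  mul_nonneg (bauerCoeff_nonneg n) (sq_nonneg _)

lemma wzKernel_succ_right (n k : ℕ) :
    wzKernel n (k + 1) =
      wzKernel n k * ((2 * k + 1) * (k + 1) / ((2 * k + 2) * (n + k + 1))) ^ 2 := by
  have h : ((n + k + 1).choose (k + 1) : ℝ) = (n + k + 1) * (n + k).choose k / (k + 1) := by
    rw [eq_div_iff (by positivity)]
    exact_mod_cast ((n + k).add_one_mul_choose_eq k).symm
  have hc : ((n + k).choose k : ℝ) ≠ 0 := by
    exact_mod_cast (Nat.choose_pos (by omega)).ne'
  rw [wzKernel, wzKernel, ← add_assoc, h, centralBinomRatio_succ]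
  field_simp

lemma wzKernel_succ_left (n k : ℕ) :
    wzKernel (n + 1) k =
      wzKernel n k * ((2 * n + 1) / (2 * n + 2)) ^ 3 / 4 * ((n + 1) / (n + k + 1)) ^ 2 := by
  have h : ((n + 1 + k).choose k : ℝ) = (n + k + 1) * (n + k).choose k / (n + 1) := by
    rw [eq_div_iff (by positivity)]
    have := (n + k).choose_mul_succ_eq k
    rw [show n + k + 1 - k = n + 1 by omega, show n + k + 1 = n + 1 + k by omega] at this
    have h' : ((n + 1 + k).choose k : ℝ) * (n + 1) = (n + k).choose k * (n + 1 + k) := by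
      exact_mod_cast this.symm
    linear_combination h'
  have hc : ((n + k).choose k : ℝ) ≠ 0 := by
    exact_mod_cast (Nat.choose_pos (by omega)).ne'
  rw [wzKernel, wzKernel, h, bauerCoeff_succ]
  field_simp

lemma wz_identity (n k : ℕ) :
    (6 * n + 4 * (k + 1 : ℕ) + 1) * wzKernel n (k + 1) - (6 * n + 4 * k + 1) * wzKernel n k =
      8 * (n + 1 : ℕ) * wzKernel (n + 1) k - 8 * n * wzKernel n k := by
  rw [wzKernel_succ_right, wzKernel_succ_left]
  push_cast
  field_simp
  ring

lemma one_le_choose_add (n k : ℕ) : (1 : ℝ) ≤ (n + k).choose k := by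
  exact_mod_cast Nat.choose_pos (by omega)

lemma wzKernel_le_bauerCoeff (n k : ℕ) : wzKernel n k ≤ bauerCoeff n := by
  have hρ := centralBinomRatio_pos k
  refine mul_le_of_le_one_right (bauerCoeff_nonneg n) (pow_le_one₀ (by positivity) ?_)
  exact div_le_one_of_le₀ ((centralBinomRatio_le_one k).trans (one_le_choose_add n k))
    (by positivity)

lemma mul_wzKernel_le (n k : ℕ) :
    (6 * n + 4 * k + 1) * wzKernel n k ≤ (6 * n + 2) * (1 / 4) ^ n / (n + k).choose k := by
  have hC := one_le_choose_add n k
  have hρ : (6 * n + 4 * k + 1) * ρ k ^ 2 ≤ 6 * n + 2 := by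
    nlinarith [mul_centralBinomRatio_sq_le_one k, sq_nonneg (ρ k),
      mul_nonneg (Nat.cast_nonneg (α := ℝ) n) (sq_nonneg (ρ k))]
  calc (6 * n + 4 * k + 1) * wzKernel n k
      = bauerCoeff n * ((6 * n + 4 * k + 1) * ρ k ^ 2) / (n + k).choose k / (n + k).choose k := by
        rw [wzKernel]; field_simp
    _ ≤ (1 / 4) ^ n * (6 * n + 2) / (n + k).choose k / 1 := by
        gcongr
        exact bauerCoeff_le n
    _ = _ := by ring

lemma succ_le_choose_add (n k : ℕ) : (k + 1 : ℝ) ≤ (n + 1 + k).choose k := by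
  have h : (k + 1).choose k ≤ (n + 1 + k).choose k := Nat.choose_le_choose k (by omega)
  rw [Nat.choose_succ_self_right] at h
  exact_mod_cast h

lemma tendsto_mul_wzKernel (n : ℕ) :
    Tendsto (fun k : ℕ ↦ (6 * n + 4 * k + 1) * wzKernel n k) atTop
      (𝓝 (if n = 0 then 4 / π else 0)) := by
  cases n with
  | zero =>
    simpa [wzKernel_zero_left] using tendsto_mul_four_add_one_centralBinomRatio_sq
  | succ n =>
    set A : ℝ := (6 * (n + 1 : ℕ) + 2) * (1 / 4) ^ (n + 1)
    refine squeeze_zero (fun k ↦ mul_nonneg (by positivity) (wzKernel_nonneg _ k)) (fun k ↦ ?_)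
      (by simpa using tendsto_one_div_add_atTop_nhds_zero_nat.const_mul A)
    calc _ ≤ A / (n + 1 + k).choose k := mul_wzKernel_le _ k
      _ ≤ A * ((k : ℝ) + 1)⁻¹ := by
        rw [div_eq_mul_inv]
        gcongr
        exact succ_le_choose_add n k

theorem hasSum_bauer : HasSum (fun n : ℕ ↦ (6 * n + 1) * bauerCoeff n) (4 / π) := by
  have hbound : Summable fun n : ℕ ↦ (6 * n + 2) * (1 / 4 : ℝ) ^ n :=
    summable_mul_geometric_of_abs_le_mul_pow (by norm_num) 1 (C := 6) fun n ↦ by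
      rw [abs_of_nonneg (by positivity)]; linarith
  have hG (k : ℕ) : Summable fun n : ℕ ↦ 8 * n * wzKernel n k :=
    (summable_mul_bauerCoeff 1 (C := 8) (f := fun n ↦ 8 * n) fun n ↦ by
      rw [abs_of_nonneg (by positivity)]; linarith).of_nonneg_of_le
      (fun n ↦ mul_nonneg (by positivity) (wzKernel_nonneg n k))
      (fun n ↦ mul_le_mul_of_nonneg_left (wzKernel_le_bauerCoeff n k) (by positivity))
  have hF (n k : ℕ) : |(6 * n + 4 * k + 1) * wzKernel n k| ≤ (6 * n + 2) * (1 / 4) ^ n := by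
    rw [abs_of_nonneg (mul_nonneg (by positivity) (wzKernel_nonneg n k))]
    exact (mul_wzKernel_le n k).trans (div_le_self (by positivity) (one_le_choose_add n k))
  have h := hasSum_of_wz (F := fun n k ↦ (6 * n + 4 * k + 1) * wzKernel n k)
    (G := fun n k ↦ 8 * n * wzKernel n k) wz_identity hG (by simp) hbound hF
    tendsto_mul_wzKernel (hasSum_ite_eq 0 (4 / π))
  simpa [wzKernel_zero_right] using h

/-- Found by Gosper's algorithm, see `bauerCoeff_mul_eq_add_gosperTerm_sub`. -/
noncomputable def gosperTerm (n : ℕ) : ℝ := (n ^ 3 * (-8 * n ^ 2 + 16 * n - 26)) * bauerCoeff n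

lemma summable_gosperTerm : Summable gosperTerm := by
  refine summable_mul_bauerCoeff 5 (C := 50) fun n ↦ ?_
  have h0 : (0 : ℝ) ≤ n := n.cast_nonneg
  rw [abs_le]
  constructor <;> nlinarith [pow_nonneg h0 2, pow_nonneg h0 3, pow_nonneg h0 4, pow_nonneg h0 5]

lemma bauerCoeff_mul_eq_add_gosperTerm_sub (n : ℕ) :
    bauerCoeff n * (n ^ 2 * (n - 1) ^ 2 * (6 * n - 7)) =
      9 / 16 * ((6 * n + 1) * bauerCoeff n) + (gosperTerm (n + 1) - gosperTerm n) := by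
  rw [gosperTerm, gosperTerm, bauerCoeff_succ]
  push_cast
  field_simp
  ring

theorem hasSum_bauerCoeff_mul :
    HasSum (fun n : ℕ ↦ bauerCoeff n * (n ^ 2 * (n - 1) ^ 2 * (6 * n - 7))) (9 / (4 * π)) := by
  have h := (hasSum_bauer.mul_left (9 / 16)).add summable_gosperTerm.hasSum_sub_succ
  rw [show 9 / 16 * (4 / π) + -gosperTerm 0 = 9 / (4 * π) by simp [gosperTerm]; ring] at h
  exact funext bauerCoeff_mul_eq_add_gosperTerm_sub ▸ h

lemma poch_five_halves (k : ℕ) : poch (5 / 2) k = 4 / 3 * ρ (k + 2) * (k + 2).factorial := by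
  induction k with
  | zero => norm_num [poch, centralBinomRatio_succ, Nat.factorial]
  | succ k ih =>
    rw [poch, prod_range_succ, ← poch, ih, centralBinomRatio_succ (k + 2),
      Nat.factorial_succ (k + 2)]
    push_cast
    field_simp
    ring

lemma summand_eq (k : ℕ) :
    poch (5 / 2) k ^ 3 / ((k.factorial : ℝ) ^ 2 * (k + 2).factorial) * ((6 * k + 5) / 4 ^ k) =
      1024 / 27 * (bauerCoeff (k + 2) *
        (((k + 2 : ℕ) : ℝ) ^ 2 * ((k + 2 : ℕ) - 1) ^ 2 * (6 * (k + 2 : ℕ) - 7))) := by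
  rw [poch_five_halves, bauerCoeff, Nat.factorial_succ (k + 1), Nat.factorial_succ k]
  push_cast
  field_simp
  ring

theorem example_thm1_p1q1r2 :
    ∑' k : ℕ, (poch (5/2) k ^ 3) / ((k.factorial : ℝ) ^ 2 * ((k + 2).factorial : ℝ)) * ((6*(k : ℝ) + 5) / (4 : ℝ) ^ k) = 256 / (3 * Real.pi) := by
  have h := (hasSum_nat_add_iff' 2).mpr hasSum_bauerCoeff_mul
  rw [funext summand_eq, tsum_mul_left, h.tsum_eq]
  norm_num [sum_range_succ]
  field_simp
  ring
end

section
/- ∑_{k=0}^∞ (1/2)_k^3 / (k!)^3 · (6k+1)/(−8)^k = 2√2/π. -/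
open Finset Filter Real Topology
open scoped Nat

lemma poch_div_factorial (x : ℝ) (k : ℕ) :
    poch x k / k ! = ∏ i ∈ range k, (x + i) / (i + 1) := by
  rw [poch, prod_div_distrib, ← prod_range_add_one_eq_factorial, Nat.cast_prod]
  push_cast
  rfl

noncomputable def deformedRatio (m i : ℕ) : ℝ :=
  ((1 / 2 + i) / (i + 1)) ^ 3 * ((i - m) / (4 * (2 * m + 3 / 2 + i)))

/-- `deformedTerm m k = (1/2)_k^3 (-m)_k / (k!^3 (2m + 3/2)_k 4^k)`. -/
noncomputable def deformedTerm (m k : ℕ) : ℝ :=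
  ∏ i ∈ range k, deformedRatio m i

noncomputable def wzCertificate (m k : ℕ) : ℝ :=
  k ^ 3 * (2 * k + 4 * m + 5) / (m + 1) ^ 3 * deformedTerm (m + 1) k

lemma deformedTerm_succ (m k : ℕ) :
    deformedTerm m (k + 1) = deformedTerm m k * deformedRatio m k :=
  prod_range_succ _ _

lemma deformedTerm_eq_zero {m k : ℕ} (h : m < k) : deformedTerm m k = 0 :=
  prod_eq_zero (mem_range.2 h) (by simp [deformedRatio])

lemma deformedTerm_contiguous (m k : ℕ) :
    deformedTerm m k * ((m + 1) * (2 * m + 3 / 2) * (2 * m + 5 / 2))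
      = (m + 1 - k) * (2 * m + 3 / 2 + k) * (2 * m + 5 / 2 + k) * deformedTerm (m + 1) k := by
  induction k with
  | zero => simp [deformedTerm]
  | succ k ih =>
    rw [deformedTerm_succ, deformedTerm_succ, mul_right_comm, ih, deformedRatio, deformedRatio]
    have h1 : (2 * m + 3 / 2 + k : ℝ) ≠ 0 := by positivity
    have h2 : (2 * (m + 1 : ℕ) + 3 / 2 + k : ℝ) ≠ 0 := by positivity
    field_simp
    push_cast
    ring

lemma wz_relation (m k : ℕ) :
    (6 * k + 1) * deformedTerm (m + 1) k
        - (1 - (1 / 4) ^ 2 / (m + 1) ^ 2) * ((6 * k + 1) * deformedTerm m k)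
      = wzCertificate m k - wzCertificate m (k + 1) := by
  have h1 : (2 * (m + 1 : ℕ) + 3 / 2 + k : ℝ) ≠ 0 := by positivity
  have h2 : ((m : ℝ) + 1) ≠ 0 := by positivity
  have h3 : ((k : ℝ) + 1) ≠ 0 := by positivity
  rw [eq_div_of_mul_eq (by positivity) (deformedTerm_contiguous m k), wzCertificate, wzCertificate,
    deformedTerm_succ, deformedRatio]
  field_simp
  push_cast
  ring

lemma sum_deformed_succ (m : ℕ) :
    ∑ k ∈ range (m + 2), (6 * k + 1) * deformedTerm (m + 1) k
      = (1 - (1 / 4) ^ 2 / (m + 1) ^ 2)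
        * ∑ k ∈ range (m + 1), (6 * k + 1) * deformedTerm m k := by
  have htelescope : ∑ k ∈ range (m + 2), (wzCertificate m k - wzCertificate m (k + 1)) = 0 := by
    rw [sum_range_sub', wzCertificate, wzCertificate,
      deformedTerm_eq_zero (by omega : m + 1 < m + 2)]
    simp
  rw [← sum_congr rfl fun k _ => wz_relation m k, sum_sub_distrib, ← mul_sum,
    sum_range_succ (fun k => (6 * k + 1) * deformedTerm m k),
    deformedTerm_eq_zero (by omega : m < m + 1), mul_zero, add_zero, sub_eq_zero] at htelescope
  exact htelescope

lemma sum_deformed_eq_prod (m : ℕ) :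
    ∑ k ∈ range (m + 1), (6 * k + 1) * deformedTerm m k
      = ∏ j ∈ range m, (1 - (1 / 4 : ℝ) ^ 2 / (j + 1) ^ 2) := by
  induction m with
  | zero => simp [deformedTerm]
  | succ m ih => rw [sum_deformed_succ, ih, prod_range_succ, mul_comm]

lemma tendsto_euler_sin_prod_quarter :
    Tendsto (fun m => ∏ j ∈ range m, (1 - (1 / 4 : ℝ) ^ 2 / (j + 1) ^ 2)) atTop
      (𝓝 (2 * √2 / π)) := by
  have h := (tendsto_euler_sin_prod (1 / 4)).const_mul (4 / π)
  rw [show π * (1 / 4) = π / 4 by ring, sin_pi_div_four] at h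
  convert h using 2 with m
  · field_simp
  · ring

lemma tendsto_deformedRatio (i : ℕ) :
    Tendsto (fun m => deformedRatio m i) atTop
      (𝓝 (((1 / 2 + i) / (i + 1)) ^ 3 * (-1 / 8 : ℝ))) := by
  have hform : ∀ m : ℕ, ((i : ℝ) - m) / (4 * (2 * m + 3 / 2 + i))
      = -1 / 8 + (3 * i + 3 / 2) / (8 * (2 * m + 3 / 2 + i)) := fun m => by
    field_simp
    ring
  have hden : Tendsto (fun m : ℕ => 8 * (2 * (m : ℝ) + 3 / 2 + i)) atTop atTop := by
    refine Tendsto.const_mul_atTop (by norm_num) (tendsto_atTop_add_const_right _ _ ?_)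
    refine tendsto_atTop_add_const_right _ _ ?_
    exact Tendsto.const_mul_atTop (by norm_num) tendsto_natCast_atTop_atTop
  simp only [deformedRatio, hform]
  simpa using ((tendsto_const_nhds.div_atTop hden).const_add (-1 / 8 : ℝ)).const_mul
    (((1 / 2 + i) / (i + 1) : ℝ) ^ 3)

lemma abs_deformedRatio_le {m i : ℕ} (h : i ≤ m) : |deformedRatio m i| ≤ 1 / 8 := by
  have hi : (i : ℝ) ≤ m := by exact_mod_cast h
  have hA : ((1 / 2 + i) / (i + 1) : ℝ) ^ 3 ≤ 1 :=
    pow_le_one₀ (by positivity) ((div_le_one (by positivity)).2 (by linarith))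
  have hB : |((i : ℝ) - m) / (4 * (2 * m + 3 / 2 + i))| ≤ 1 / 8 := by
    rw [abs_div, abs_of_nonpos (by linarith), abs_of_pos (by positivity),
      div_le_iff₀ (by positivity)]
    linarith
  rw [deformedRatio, abs_mul, abs_of_nonneg (by positivity)]
  simpa using mul_le_mul hA hB (abs_nonneg _) zero_le_one

lemma abs_deformedTerm_le (m k : ℕ) : |deformedTerm m k| ≤ (1 / 8) ^ k := by
  rcases lt_or_ge m k with h | h
  · rw [deformedTerm_eq_zero h, abs_zero]
    positivity
  · rw [deformedTerm, abs_prod]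
    calc ∏ i ∈ range k, |deformedRatio m i| ≤ ∏ _i ∈ range k, (1 / 8 : ℝ) :=
          prod_le_prod (fun _ _ => abs_nonneg _)
            fun i hi => abs_deformedRatio_le (by have := mem_range.1 hi; omega)
      _ = (1 / 8) ^ k := by rw [prod_const, card_range]

lemma summand_eq_prod (k : ℕ) :
    poch (1 / 2) k ^ 3 / (k ! : ℝ) ^ 3 * ((6 * k + 1) / (-8 : ℝ) ^ k)
      = (6 * k + 1) * ∏ i ∈ range k, ((1 / 2 + i) / (i + 1)) ^ 3 * (-1 / 8 : ℝ) := by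
  rw [← div_pow, poch_div_factorial, prod_mul_distrib, prod_pow, prod_const, card_range,
    show (-1 / 8 : ℝ) = (-8)⁻¹ by norm_num, inv_pow]
  ring

lemma summable_linear_mul_geometric :
    Summable (fun k : ℕ => (6 * k + 1) * (1 / 8 : ℝ) ^ k) := by
  have h := summable_pow_mul_geometric_of_norm_lt_one 1 (r := (1 / 8 : ℝ)) (by norm_num)
  simp only [pow_one] at h
  have hgeom := summable_geometric_of_lt_one (r := (1 / 8 : ℝ)) (by norm_num) (by norm_num)
  simpa [add_mul, mul_assoc] using (h.mul_left 6).add hgeom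

theorem example_thm3_p0q0 :
    ∑' k : ℕ, (poch (1/2) k ^ 3) / ((k.factorial : ℝ) ^ 3) * ((6*(k : ℝ) + 1) / (-8 : ℝ) ^ k) = 2 * Real.sqrt 2 / Real.pi := by
  have hfinite (m : ℕ) : ∑' k, (6 * k + 1) * deformedTerm m k
      = ∏ j ∈ range m, (1 - (1 / 4 : ℝ) ^ 2 / (j + 1) ^ 2) := by
    rw [tsum_eq_sum (s := range (m + 1)) fun k hk => by
      rw [deformedTerm_eq_zero (by simpa using hk), mul_zero], sum_deformed_eq_prod]
  have hlimit : Tendsto (fun m => ∑' k, (6 * k + 1) * deformedTerm m k) atTop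
      (𝓝 (∑' k : ℕ, poch (1 / 2) k ^ 3 / (k ! : ℝ) ^ 3 * ((6 * k + 1) / (-8 : ℝ) ^ k))) := by
    refine tendsto_tsum_of_dominated_convergence summable_linear_mul_geometric (fun k => ?_)
      (Eventually.of_forall fun m k => ?_)
    · rw [summand_eq_prod]
      exact (tendsto_finsetProd _ fun i _ => tendsto_deformedRatio i).const_mul _
    · rw [norm_mul, Real.norm_eq_abs, Real.norm_eq_abs, abs_of_nonneg (by positivity)]
      exact mul_le_mul_of_nonneg_left (abs_deformedTerm_le m k) (by positivity)
  simp only [hfinite] at hlimit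
  exact tendsto_nhds_unique hlimit tendsto_euler_sin_prod_quarter
end
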